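/- Theorem 1, distance bound: under the CODER iteration with F monotone and satisfying the blockwise Lipschitz assumption, if x⋆ ∈ ℝ^d solves the generalized Minty variational inequality, i.e., ⟨F(x), x − x⋆⟩ + g(x) − g(x⋆) ≥ 0 for all x ∈ ℝ^d, then for every k ≥ 1: ‖x_k − x⋆‖² ≤ (2/(1 + γA_k))‖x₀ − x⋆‖². -/

import Mathlib

open scoped RealInnerProductSpace

/-- Operator norm of a square real matrix, viewed as a linear map on Euclidean space. -/
noncomputable def matOpNorm {d : ℕ} (Q : Matrix (Fin d) (Fin d) ℝ) : ℝ :=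
  ‖Matrix.toEuclideanCLM (𝕜 := ℝ) Q‖

/-- The quadratic form `vᵀ Q v` on Euclidean space. -/
noncomputable def quadForm {d : ℕ} (Q : Matrix (Fin d) (Fin d) ℝ)
    (v : EuclideanSpace ℝ (Fin d)) : ℝ :=
  ⟪v, Matrix.toEuclideanCLM (𝕜 := ℝ) Q v⟫

/-!
For fixed `u`, the iterate `x k` minimizes `z ↦ ψ k z u`, which is `(1 + γ A k)`-strongly convex,
so `ψ k z u ≥ ψ k (x k) u + (1 + γ A k) / 2 * ‖z - x k‖²`. Write `e k = F (x k) - p k`. The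
extrapolation makes `a k • (F (x k) - q k) = a k • e k - a (k - 1) • e (k - 1)` telescope, and
the blockwise Lipschitz assumption gives `‖e k‖ ≤ L ‖x k - x (k - 1)‖`. Since
`a k * L = (1 + γ A (k - 1)) / 2`, the cross terms `a k ⟪e k, ·⟫` are absorbed by half of the
strong-convexity gains. Induction on `k` then gives
`∑ a j (⟪F (x j), x j - u⟫ + g (x j) - g u) + (1 + γ A k) / 4 * ‖x k - u‖² ≤ ‖x 0 - u‖² / 2`.
At `u = x⋆` the Minty inequality makes the sum nonnegative.
-/

open Finset Filter Topology

theorem convexOn_finset_sum {ι E : Type*} [AddCommGroup E] [Module ℝ E] {s : Set E}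
    (hs : Convex ℝ s) (t : Finset ι) {f : ι → E → ℝ} (hf : ∀ i ∈ t, ConvexOn ℝ s (f i)) :
    ConvexOn ℝ s fun z => ∑ i ∈ t, f i z := by
  classical
  induction t using Finset.cons_induction with
  | empty => simpa using convexOn_const (0 : ℝ) hs
  | cons i t hi ih =>
    simp only [sum_cons]
    exact (hf i (mem_cons_self i t)).add (ih fun j hj => hf j (mem_cons_of_mem hj))

section InnerProductSpace

variable {E : Type*} [NormedAddCommGroup E] [InnerProductSpace ℝ E]

theorem real_inner_le_of_norm_le_mul {e : E} {c r : ℝ} (hc : 0 ≤ c) (he : ‖e‖ ≤ c * r) (v : E) :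
    ⟪e, v⟫ ≤ c / 2 * (r ^ 2 + ‖v‖ ^ 2) :=
  calc ⟪e, v⟫ ≤ ‖e‖ * ‖v‖ := real_inner_le_norm e v
    _ ≤ c * r * ‖v‖ := mul_le_mul_of_nonneg_right he (norm_nonneg v)
    _ ≤ c / 2 * (r ^ 2 + ‖v‖ ^ 2) := by nlinarith [mul_nonneg hc (sq_nonneg (r - ‖v‖))]

theorem ConvexOn.add_mul_norm_sub_sq_le_of_isMinOn {f : E → ℝ} {μ : ℝ}
    (hf : ConvexOn ℝ Set.univ fun z => f z - μ / 2 * ‖z‖ ^ 2) {xm : E}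
    (hxm : IsMinOn f Set.univ xm) (z : E) : f xm + μ / 2 * ‖z - xm‖ ^ 2 ≤ f z := by
  -- compare `f xm` with `f` on the segment `[xm, z]`, then let the point tend to `xm`
  have hseg : ∀ t ∈ Set.Ioo (0 : ℝ) 1, μ / 2 * (1 - t) * ‖z - xm‖ ^ 2 ≤ f z - f xm := by
    rintro t ⟨ht0, ht1⟩
    have hcomb := hf.2 (Set.mem_univ xm) (Set.mem_univ z) (sub_nonneg.2 ht1.le) ht0.le
      (sub_add_cancel 1 t)
    have hnorm : ‖(1 - t) • xm + t • z‖ ^ 2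
        = (1 - t) * ‖xm‖ ^ 2 + t * ‖z‖ ^ 2 - t * (1 - t) * ‖z - xm‖ ^ 2 := by
      simp only [← real_inner_self_eq_norm_sq, inner_add_left, inner_add_right, inner_sub_left,
        inner_sub_right, real_inner_smul_left, real_inner_smul_right, real_inner_comm xm z]
      ring
    have hmin := isMinOn_univ_iff.1 hxm ((1 - t) • xm + t • z)
    simp only [hnorm, smul_eq_mul] at hcomb
    nlinarith [mul_pos ht0 (sub_pos.2 ht1)]
  have hlim : Tendsto (fun t : ℝ => μ / 2 * (1 - t) * ‖z - xm‖ ^ 2) (𝓝[>] 0)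
      (𝓝 (μ / 2 * (1 - 0) * ‖z - xm‖ ^ 2)) :=
    ((Continuous.tendsto (by fun_prop) 0)).mono_left nhdsWithin_le_nhds
  have := le_of_tendsto hlim (eventually_of_mem (Ioo_mem_nhdsGT one_pos) hseg)
  linarith

-- The paper's estimate sequence `ψ k z u`, whose minimizer in `z` is the iterate `x k`.
noncomputable def estimateSeq (a : ℕ → ℝ) (q : ℕ → E) (G : E → ℝ) (x₀ : E) (k : ℕ) (z u : E) : ℝ :=
  ∑ j ∈ Icc 1 k, a j * (⟪q j, z - u⟫ + G z - G u) + 1 / 2 * ‖z - x₀‖ ^ 2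

variable {a : ℕ → ℝ} {q : ℕ → E} {G : E → ℝ} {x₀ : E}

theorem estimateSeq_zero (z u : E) : estimateSeq a q G x₀ 0 z u = 1 / 2 * ‖z - x₀‖ ^ 2 := by
  simp [estimateSeq]

theorem estimateSeq_succ (k : ℕ) (z u : E) :
    estimateSeq a q G x₀ (k + 1) z u
      = estimateSeq a q G x₀ k z u + a (k + 1) * (⟪q (k + 1), z - u⟫ + G z - G u) := by
  simp only [estimateSeq, sum_Icc_succ_top (Nat.le_add_left 1 k)]
  ring

theorem estimateSeq_self (k : ℕ) (u : E) : estimateSeq a q G x₀ k u u = 1 / 2 * ‖u - x₀‖ ^ 2 := by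
  simp [estimateSeq]

theorem isMinOn_estimateSeq_zero (u : E) :
    IsMinOn (fun z => estimateSeq a q G x₀ 0 z u) Set.univ x₀ :=
  isMinOn_univ_iff.2 fun z => by simp [estimateSeq_zero]

theorem convexOn_estimateSeq_sub {γ : ℝ} (ha : ∀ j, 0 ≤ a j)
    (hG : ConvexOn ℝ Set.univ fun z => G z - γ / 2 * ‖z‖ ^ 2) (k : ℕ) (u : E) :
    ConvexOn ℝ Set.univ fun z =>
      estimateSeq a q G x₀ k z u - (1 + γ * ∑ j ∈ Icc 1 k, a j) / 2 * ‖z‖ ^ 2 := by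
  have hsplit : (fun z => estimateSeq a q G x₀ k z u - (1 + γ * ∑ j ∈ Icc 1 k, a j) / 2 * ‖z‖ ^ 2)
      = fun z => (∑ j ∈ Icc 1 k, a j) • (G z - γ / 2 * ‖z‖ ^ 2)
          + (innerₗ E (∑ j ∈ Icc 1 k, a j • q j - x₀) z
            + (1 / 2 * ‖x₀‖ ^ 2 - ∑ j ∈ Icc 1 k, a j * (⟪q j, u⟫ + G u))) := by
    funext z
    have hlin : ∑ j ∈ Icc 1 k, a j * (⟪q j, z - u⟫ + G z - G u)
        = ∑ j ∈ Icc 1 k, a j * ⟪q j, z⟫ + (∑ j ∈ Icc 1 k, a j) * G z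
          - ∑ j ∈ Icc 1 k, a j * (⟪q j, u⟫ + G u) := by
      rw [sum_mul, ← sum_add_distrib, ← sum_sub_distrib]
      exact sum_congr rfl fun j _ => by rw [inner_sub_right]; ring
    simp only [estimateSeq, hlin, innerₗ_apply_apply, inner_sub_left, sum_inner,
      real_inner_smul_left, smul_eq_mul, norm_sub_sq_real, real_inner_comm x₀ z]
    ring
  rw [hsplit]
  exact (hG.smul (sum_nonneg fun j _ => ha j)).add
    (((innerₗ E _).convexOn convex_univ).add_const _)

end InnerProductSpace

section Blocks

variable {d m : ℕ}

theorem quadForm_eq_sum (Q : Matrix (Fin d) (Fin d) ℝ) (v : EuclideanSpace ℝ (Fin d)) :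
    quadForm Q v = ∑ j, ∑ l, v j * (Q j l * v l) := by
  simp only [quadForm, Matrix.inner_toEuclideanCLM, dotProduct, Matrix.mulVec, mul_sum]

theorem quadForm_le_matOpNorm_mul (Q : Matrix (Fin d) (Fin d) ℝ) (v : EuclideanSpace ℝ (Fin d)) :
    quadForm Q v ≤ matOpNorm Q * ‖v‖ ^ 2 :=
  calc quadForm Q v ≤ ‖v‖ * ‖Matrix.toEuclideanCLM (𝕜 := ℝ) Q v‖ := real_inner_le_norm _ _
    _ ≤ ‖v‖ * (matOpNorm Q * ‖v‖) :=
        mul_le_mul_of_nonneg_left ((Matrix.toEuclideanCLM (𝕜 := ℝ) Q).le_opNorm v) (norm_nonneg v)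
    _ = matOpNorm Q * ‖v‖ ^ 2 := by ring

theorem quadForm_sum (Q : Fin m → Matrix (Fin d) (Fin d) ℝ) (v : EuclideanSpace ℝ (Fin d)) :
    quadForm (∑ i, Q i) v = ∑ i, quadForm (Q i) v := by
  simp [quadForm, inner_sum]

theorem quadForm_indicator (s : Fin d → Prop) [DecidablePred s] {Q Q' : Matrix (Fin d) (Fin d) ℝ}
    (hQ' : ∀ j l, Q' j l = if s j ∧ s l then Q j l else 0) (v : EuclideanSpace ℝ (Fin d)) :
    quadForm Q (WithLp.toLp 2 fun j => if s j then v j else 0) = quadForm Q' v := by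
  rw [quadForm_eq_sum, quadForm_eq_sum]
  refine sum_congr rfl fun j _ => sum_congr rfl fun l _ => ?_
  by_cases hj : s j <;> by_cases hl : s l <;> simp [hQ', hj, hl]

theorem norm_sub_le_of_blockwise_lipschitz (blk : Fin d → Fin m)
    (F : EuclideanSpace ℝ (Fin d) → EuclideanSpace ℝ (Fin d))
    (Q Qhat : Fin m → Matrix (Fin d) (Fin d) ℝ)
    (hlip : ∀ (i : Fin m) (z w : EuclideanSpace ℝ (Fin d)),
      ∑ j ∈ univ.filter (fun j => blk j = i), (F z j - F w j) ^ 2 ≤ quadForm (Q i) (z - w))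
    (hQhat : ∀ (i : Fin m) (j k : Fin d), Qhat i j k = if i ≤ blk j ∧ i ≤ blk k then Q i j k else 0)
    {L : ℝ} (hL : 0 ≤ L) (hL2 : L ^ 2 = matOpNorm (∑ i, Qhat i)) (y z P : EuclideanSpace ℝ (Fin d))
    (hP : ∀ j, P j = F (WithLp.toLp 2 fun j' => if blk j' < blk j then y j' else z j') j) :
    ‖F y - P‖ ≤ L * ‖y - z‖ := by
  have hblock : ∀ i, ∑ j ∈ univ.filter (fun j => blk j = i), (F y j - P j) ^ 2
      ≤ quadForm (Qhat i) (y - z) := by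
    intro i
    set w : EuclideanSpace ℝ (Fin d) :=
      WithLp.toLp 2 fun j' => if blk j' < i then y j' else z j'
    have hyw : y - w = WithLp.toLp 2 fun j => if i ≤ blk j then (y - z) j else 0 := by
      ext j
      by_cases hj : blk j < i
      · simp [w, hj, not_le.2 hj]
      · simp [w, hj, not_lt.1 hj]
    calc ∑ j ∈ univ.filter (fun j => blk j = i), (F y j - P j) ^ 2
        = ∑ j ∈ univ.filter (fun j => blk j = i), (F y j - F w j) ^ 2 :=
          sum_congr rfl fun j hj => by rw [hP j, (mem_filter.1 hj).2]
      _ ≤ quadForm (Q i) (y - w) := hlip i y w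
      _ = quadForm (Qhat i) (y - z) := by rw [hyw, quadForm_indicator _ (hQhat i)]
  have hsq : ‖F y - P‖ ^ 2 ≤ (L * ‖y - z‖) ^ 2 :=
    calc ‖F y - P‖ ^ 2 = ∑ i, ∑ j ∈ univ.filter (fun j => blk j = i), (F y j - P j) ^ 2 := by
          rw [EuclideanSpace.norm_sq_eq, sum_fiberwise]
          simp [Real.norm_eq_abs, sq_abs]
      _ ≤ ∑ i, quadForm (Qhat i) (y - z) := sum_le_sum fun i _ => hblock i
      _ = quadForm (∑ i, Qhat i) (y - z) := (quadForm_sum _ _).symm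
      _ ≤ matOpNorm (∑ i, Qhat i) * ‖y - z‖ ^ 2 := quadForm_le_matOpNorm_mul _ _
      _ = (L * ‖y - z‖) ^ 2 := by rw [← hL2]; ring
  exact (pow_le_pow_iff_left₀ (norm_nonneg _) (by positivity) two_ne_zero).1 hsq

theorem convexOn_sum_sub_mul_norm_sq (blk : Fin d → Fin m)
    (g : Fin m → EuclideanSpace ℝ (Fin d) → ℝ) (γ : ℝ)
    (hg : ∀ i, ConvexOn ℝ Set.univ fun z : EuclideanSpace ℝ (Fin d) =>
      g i z - γ / 2 * ∑ j ∈ univ.filter (fun j => blk j = i), (z j) ^ 2) :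
    ConvexOn ℝ Set.univ fun z => ∑ i, g i z - γ / 2 * ‖z‖ ^ 2 := by
  have hsplit : (fun z : EuclideanSpace ℝ (Fin d) => ∑ i, g i z - γ / 2 * ‖z‖ ^ 2)
      = fun z => ∑ i, (g i z - γ / 2 * ∑ j ∈ univ.filter (fun j => blk j = i), (z j) ^ 2) := by
    funext z
    rw [sum_sub_distrib, ← mul_sum, sum_fiberwise, EuclideanSpace.norm_sq_eq]
    simp [Real.norm_eq_abs, sq_abs]
  rw [hsplit]
  exact convexOn_finset_sum convex_univ _ fun i _ => hg i

end Blocks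

structure IsCoderStepSize (γ L : ℝ) (a A : ℕ → ℝ) : Prop where
  γ_nonneg : 0 ≤ γ
  L_pos : 0 < L
  a_zero : a 0 = 0
  A_zero : A 0 = 0
  a_succ : ∀ k, a (k + 1) = (1 + γ * A k) / (2 * L)
  A_succ : ∀ k, A (k + 1) = A k + a (k + 1)

namespace IsCoderStepSize

variable {γ L : ℝ} {a A : ℕ → ℝ} {E : Type*} [NormedAddCommGroup E] [InnerProductSpace ℝ E]
  {G : E → ℝ} {x f q e : ℕ → E}

theorem A_nonneg (h : IsCoderStepSize γ L a A) (k : ℕ) : 0 ≤ A k := by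
  induction k with
  | zero => rw [h.A_zero]
  | succ k ih =>
    have hγA := mul_nonneg h.γ_nonneg ih
    rw [h.A_succ, h.a_succ]
    exact add_nonneg ih (div_nonneg (by linarith) (by linarith [h.L_pos]))

theorem one_add_mul_A_pos (h : IsCoderStepSize γ L a A) (k : ℕ) : 0 < 1 + γ * A k := by
  linarith [mul_nonneg h.γ_nonneg (h.A_nonneg k)]

theorem a_succ_pos (h : IsCoderStepSize γ L a A) (k : ℕ) : 0 < a (k + 1) := by
  rw [h.a_succ]; exact div_pos (h.one_add_mul_A_pos k) (by linarith [h.L_pos])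

theorem a_nonneg (h : IsCoderStepSize γ L a A) (k : ℕ) : 0 ≤ a k := by
  cases k with
  | zero => rw [h.a_zero]
  | succ k => exact (h.a_succ_pos k).le

theorem monotone_A (h : IsCoderStepSize γ L a A) : Monotone A :=
  monotone_nat_of_le_succ fun k => by rw [h.A_succ]; linarith [h.a_nonneg (k + 1)]

theorem A_eq_sum (h : IsCoderStepSize γ L a A) (k : ℕ) : A k = ∑ j ∈ Icc 1 k, a j := by
  induction k with
  | zero => simp [h.A_zero]
  | succ k ih => rw [sum_Icc_succ_top (Nat.le_add_left 1 k), ← ih, h.A_succ]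

theorem a_mul_L_le (h : IsCoderStepSize γ L a A) (k : ℕ) :
    a k * L ≤ (1 + γ * A (k - 1)) / 2 := by
  cases k with
  | zero => rw [h.a_zero, zero_mul]; exact (half_pos (h.one_add_mul_A_pos _)).le
  | succ k => rw [h.a_succ, Nat.add_sub_cancel]; exact le_of_eq (by field_simp [h.L_pos.ne'])

-- `k - 1` truncates, so at `k = 0` the convention `x (0 - 1) = x 0` is the paper's `x₋₁ = x₀`.
theorem mul_inner_le (h : IsCoderStepSize γ L a A) (he : ∀ k, ‖e k‖ ≤ L * ‖x k - x (k - 1)‖)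
    (k : ℕ) (v : E) :
    a k * ⟪e k, v⟫ ≤ (1 + γ * A (k - 1)) / 4 * ‖x k - x (k - 1)‖ ^ 2
      + (1 + γ * A k) / 4 * ‖v‖ ^ 2 := by
  have hnorm : ‖a k • e k‖ ≤ (1 + γ * A (k - 1)) / 2 * ‖x k - x (k - 1)‖ :=
    calc ‖a k • e k‖ = a k * ‖e k‖ := by rw [norm_smul, Real.norm_of_nonneg (h.a_nonneg k)]
      _ ≤ a k * L * ‖x k - x (k - 1)‖ := by
          rw [mul_assoc]; exact mul_le_mul_of_nonneg_left (he k) (h.a_nonneg k)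
      _ ≤ (1 + γ * A (k - 1)) / 2 * ‖x k - x (k - 1)‖ :=
          mul_le_mul_of_nonneg_right (h.a_mul_L_le k) (norm_nonneg _)
  have hA : γ * A (k - 1) ≤ γ * A k :=
    mul_le_mul_of_nonneg_left (h.monotone_A (Nat.sub_le k 1)) h.γ_nonneg
  have := real_inner_le_of_norm_le_mul (half_pos (h.one_add_mul_A_pos (k - 1))).le hnorm v
  rw [real_inner_smul_left] at this
  nlinarith [sq_nonneg ‖v‖]

theorem add_mul_norm_sub_sq_le_estimateSeq (h : IsCoderStepSize γ L a A)
    (hG : ConvexOn ℝ Set.univ fun z => G z - γ / 2 * ‖z‖ ^ 2) {k : ℕ} {u : E}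
    (hmin : IsMinOn (fun z => estimateSeq a q G (x 0) k z u) Set.univ (x k)) (z : E) :
    estimateSeq a q G (x 0) k (x k) u + (1 + γ * A k) / 2 * ‖z - x k‖ ^ 2
      ≤ estimateSeq a q G (x 0) k z u := by
  have hconv := convexOn_estimateSeq_sub (q := q) (x₀ := x 0) h.a_nonneg hG k u
  rw [← h.A_eq_sum] at hconv
  exact hconv.add_mul_norm_sub_sq_le_of_isMinOn hmin z

theorem le_estimateSeq (h : IsCoderStepSize γ L a A)
    (hG : ConvexOn ℝ Set.univ fun z => G z - γ / 2 * ‖z‖ ^ 2)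
    (hmin : ∀ k u, IsMinOn (fun z => estimateSeq a q G (x 0) k z u) Set.univ (x k))
    (hq : ∀ k, a (k + 1) • (f (k + 1) - q (k + 1)) = a (k + 1) • e (k + 1) - a k • e k)
    (he : ∀ k, ‖e k‖ ≤ L * ‖x k - x (k - 1)‖) (k : ℕ) (u z : E) :
    ∑ j ∈ Icc 1 k, a j * (⟪f j, x j - u⟫ + G (x j) - G u) - a k * ⟪e k, x k - u⟫
      + (1 + γ * A (k - 1)) / 4 * ‖x k - x (k - 1)‖ ^ 2 + (1 + γ * A k) / 2 * ‖z - x k‖ ^ 2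
      ≤ estimateSeq a q G (x 0) k z u := by
  induction k generalizing z with
  | zero => simp [h.a_zero, h.A_zero, estimateSeq_zero]
  | succ k ih =>
    have hgap := h.add_mul_norm_sub_sq_le_estimateSeq hG (hmin (k + 1) u) z
    have hprev := ih (x (k + 1))
    have hcost := h.mul_inner_le he k (x k - x (k + 1))
    have hext : a (k + 1) * ⟪f (k + 1), x (k + 1) - u⟫ - a (k + 1) * ⟪e (k + 1), x (k + 1) - u⟫
        = a (k + 1) * ⟪q (k + 1), x (k + 1) - u⟫ - a k * ⟪e k, x (k + 1) - u⟫ := by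
      have := congrArg (fun v => ⟪v, x (k + 1) - u⟫) (hq k)
      simp only [inner_sub_left, real_inner_smul_left] at this
      linear_combination this
    have hsplit : ⟪e k, x k - x (k + 1)⟫ = ⟪e k, x k - u⟫ - ⟪e k, x (k + 1) - u⟫ := by
      rw [← inner_sub_right, sub_sub_sub_cancel_right]
    rw [estimateSeq_succ] at hgap
    rw [sum_Icc_succ_top (Nat.le_add_left 1 k), Nat.add_sub_cancel]
    rw [hsplit, norm_sub_rev (x k) (x (k + 1))] at hcost
    linarith

theorem sum_add_mul_norm_sub_sq_le (h : IsCoderStepSize γ L a A)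
    (hG : ConvexOn ℝ Set.univ fun z => G z - γ / 2 * ‖z‖ ^ 2)
    (hmin : ∀ k u, IsMinOn (fun z => estimateSeq a q G (x 0) k z u) Set.univ (x k))
    (hq : ∀ k, a (k + 1) • (f (k + 1) - q (k + 1)) = a (k + 1) • e (k + 1) - a k • e k)
    (he : ∀ k, ‖e k‖ ≤ L * ‖x k - x (k - 1)‖) (k : ℕ) (u : E) :
    ∑ j ∈ Icc 1 k, a j * (⟪f j, x j - u⟫ + G (x j) - G u) + (1 + γ * A k) / 4 * ‖x k - u‖ ^ 2
      ≤ 1 / 2 * ‖x 0 - u‖ ^ 2 := by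
  have hbound := h.le_estimateSeq hG hmin hq he k u u
  have hcost := h.mul_inner_le he k (x k - u)
  rw [estimateSeq_self, norm_sub_rev u, norm_sub_rev u] at hbound
  linarith

end IsCoderStepSize

theorem stmt13_general {d m : ℕ} (blk : Fin d → Fin m)
    (F : EuclideanSpace ℝ (Fin d) → EuclideanSpace ℝ (Fin d))
    (γ L : ℝ) (hγ : 0 ≤ γ) (hL : 0 < L)
    -- blockwise Lipschitz assumption
    (Q : Fin m → Matrix (Fin d) (Fin d) ℝ)
    (hlip : ∀ (i : Fin m) (z w : EuclideanSpace ℝ (Fin d)),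
      ∑ j ∈ Finset.univ.filter (fun j => blk j = i), (F z j - F w j) ^ 2
        ≤ quadForm (Q i) (z - w))
    (Qhat : Fin m → Matrix (Fin d) (Fin d) ℝ)
    (hQhat : ∀ (i : Fin m) (j k : Fin d),
      Qhat i j k = if i ≤ blk j ∧ i ≤ blk k then Q i j k else 0)
    (hL2 : L ^ 2 = matOpNorm (∑ i, Qhat i))
    -- the block components of the separable regularizer g
    (g : Fin m → EuclideanSpace ℝ (Fin d) → ℝ)
    (hgsc : ∀ i : Fin m, ConvexOn ℝ Set.univ (fun z : EuclideanSpace ℝ (Fin d) =>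
      g i z - γ / 2 * ∑ j ∈ Finset.univ.filter (fun j => blk j = i), (z j) ^ 2))
    (G : EuclideanSpace ℝ (Fin d) → ℝ) (hG : ∀ z, G z = ∑ i, g i z)
    -- step sizes
    (a A : ℕ → ℝ) (ha0 : a 0 = 0) (hA0 : A 0 = 0)
    (ha : ∀ k : ℕ, a (k + 1) = (1 + γ * A k) / (2 * L))
    (hA : ∀ k : ℕ, A (k + 1) = A k + a (k + 1))
    -- iterates, cyclic coordinate gradients, and extrapolated gradients
    (x p q : ℕ → EuclideanSpace ℝ (Fin d))
    (hp0 : p 0 = F (x 0))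
    (hp : ∀ (k : ℕ) (j : Fin d),
      p (k + 1) j = F (WithLp.toLp 2 (fun j' => if blk j' < blk j then x (k + 1) j' else x k j')) j)
    (hq : ∀ (k : ℕ) (j : Fin d),
      q (k + 1) j = p (k + 1) j + a k / a (k + 1) * (F (x k) j - p k j))
    -- estimation sequence and its minimization property
    (ψ : ℕ → EuclideanSpace ℝ (Fin d) → EuclideanSpace ℝ (Fin d) → ℝ)
    (hψ : ∀ (k : ℕ) (z u : EuclideanSpace ℝ (Fin d)),
      ψ k z u = ∑ j ∈ Finset.Icc 1 k, a j * (⟪q j, z - u⟫ + G z - G u)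
        + 1 / 2 * ‖z - x 0‖ ^ 2)
    (hxmin : ∀ k : ℕ, 1 ≤ k → ∀ u z : EuclideanSpace ℝ (Fin d), ψ k (x k) u ≤ ψ k z u)
    -- a solution of the generalized Minty variational inequality
    (xstar : EuclideanSpace ℝ (Fin d))
    (hstar : ∀ z : EuclideanSpace ℝ (Fin d), 0 ≤ ⟪F z, z - xstar⟫ + G z - G xstar) :
    ∀ k : ℕ, 1 ≤ k →
      ‖x k - xstar‖ ^ 2 ≤ 2 / (1 + γ * A k) * ‖x 0 - xstar‖ ^ 2 := by
  intro k _
  have hs : IsCoderStepSize γ L a A := ⟨hγ, hL, ha0, hA0, ha, hA⟩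
  obtain rfl : ψ = estimateSeq a q G (x 0) := funext fun k => funext fun z => funext (hψ k z)
  have hGconv : ConvexOn ℝ Set.univ fun z => G z - γ / 2 * ‖z‖ ^ 2 := by
    simpa only [hG] using convexOn_sum_sub_mul_norm_sq blk g γ hgsc
  have hmin : ∀ k u, IsMinOn (fun z => estimateSeq a q G (x 0) k z u) Set.univ (x k) := by
    rintro (_ | k) u
    · exact isMinOn_estimateSeq_zero u
    · exact isMinOn_univ_iff.2 (hxmin (k + 1) k.succ_pos u)
  have hext : ∀ k, a (k + 1) • (F (x (k + 1)) - q (k + 1))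
      = a (k + 1) • (F (x (k + 1)) - p (k + 1)) - a k • (F (x k) - p k) := fun k => by
    ext j
    simp only [PiLp.sub_apply, PiLp.smul_apply, smul_eq_mul, hq k j]
    field_simp [(hs.a_succ_pos k).ne']
    ring
  have herr : ∀ k, ‖F (x k) - p k‖ ≤ L * ‖x k - x (k - 1)‖ := by
    rintro (_ | k)
    · simp [hp0]
    · exact norm_sub_le_of_blockwise_lipschitz blk F Q Qhat hlip hQhat hL.le hL2 _ _ _ (hp k)
  have hbound := hs.sum_add_mul_norm_sub_sq_le (f := fun j => F (x j)) hGconv hmin hext herr k xstar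
  have hgap : 0 ≤ ∑ j ∈ Icc 1 k, a j * (⟪F (x j), x j - xstar⟫ + G (x j) - G xstar) :=
    sum_nonneg fun j _ => mul_nonneg (hs.a_nonneg j) (hstar (x j))
  rw [div_mul_eq_mul_div, le_div_iff₀ (hs.one_add_mul_A_pos k)]
  linarith

/-- **Statement 13** (Theorem 1, distance bound). Under the CODER iteration with `F`
monotone and satisfying the blockwise Lipschitz assumption, if `x⋆` solves the
generalized Minty variational inequality
`⟨F(z), z − x⋆⟩ + g(z) − g(x⋆) ≥ 0` for all `z`, then for every `k ≥ 1`: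
`‖x_k − x⋆‖² ≤ (2/(1 + γA_k))‖x₀ − x⋆‖²`. -/
theorem stmt13 {d m : ℕ} (blk : Fin d → Fin m) (hblk : Monotone blk)
    (F : EuclideanSpace ℝ (Fin d) → EuclideanSpace ℝ (Fin d))
    (γ L : ℝ) (hγ : 0 ≤ γ) (hL : 0 < L)
    -- blockwise Lipschitz assumption
    (Q : Fin m → Matrix (Fin d) (Fin d) ℝ)
    (hpsd : ∀ i, (Q i).PosSemidef)
    (hlip : ∀ (i : Fin m) (z w : EuclideanSpace ℝ (Fin d)),
      ∑ j ∈ Finset.univ.filter (fun j => blk j = i), (F z j - F w j) ^ 2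
        ≤ quadForm (Q i) (z - w))
    (Qhat : Fin m → Matrix (Fin d) (Fin d) ℝ)
    (hQhat : ∀ (i : Fin m) (j k : Fin d),
      Qhat i j k = if i ≤ blk j ∧ i ≤ blk k then Q i j k else 0)
    (hL2 : L ^ 2 = matOpNorm (∑ i, Qhat i))
    -- the block components of the separable regularizer g
    (g : Fin m → EuclideanSpace ℝ (Fin d) → ℝ)
    (hgdep : ∀ (i : Fin m) (z w : EuclideanSpace ℝ (Fin d)),
      (∀ j, blk j = i → z j = w j) → g i z = g i w)
    (hgsc : ∀ i : Fin m, ConvexOn ℝ Set.univ (fun z : EuclideanSpace ℝ (Fin d) =>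
      g i z - γ / 2 * ∑ j ∈ Finset.univ.filter (fun j => blk j = i), (z j) ^ 2))
    (G : EuclideanSpace ℝ (Fin d) → ℝ) (hG : ∀ z, G z = ∑ i, g i z)
    -- step sizes
    (a A : ℕ → ℝ) (ha0 : a 0 = 0) (hA0 : A 0 = 0)
    (ha : ∀ k : ℕ, a (k + 1) = (1 + γ * A k) / (2 * L))
    (hA : ∀ k : ℕ, A (k + 1) = A k + a (k + 1))
    -- iterates, cyclic coordinate gradients, and extrapolated gradients
    (x p q : ℕ → EuclideanSpace ℝ (Fin d))
    (hp0 : p 0 = F (x 0))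
    (hp : ∀ (k : ℕ) (j : Fin d),
      p (k + 1) j = F (WithLp.toLp 2 (fun j' => if blk j' < blk j then x (k + 1) j' else x k j')) j)
    (hq : ∀ (k : ℕ) (j : Fin d),
      q (k + 1) j = p (k + 1) j + a k / a (k + 1) * (F (x k) j - p k j))
    -- estimation sequence and its minimization property
    (ψ : ℕ → EuclideanSpace ℝ (Fin d) → EuclideanSpace ℝ (Fin d) → ℝ)
    (hψ : ∀ (k : ℕ) (z u : EuclideanSpace ℝ (Fin d)),
      ψ k z u = ∑ j ∈ Finset.Icc 1 k, a j * (⟪q j, z - u⟫ + G z - G u)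
        + 1 / 2 * ‖z - x 0‖ ^ 2)
    -- monotonicity of F
    (hmonoF : ∀ z w : EuclideanSpace ℝ (Fin d), 0 ≤ ⟪F z - F w, z - w⟫)
    (hxmin : ∀ k : ℕ, 1 ≤ k → ∀ u z : EuclideanSpace ℝ (Fin d), ψ k (x k) u ≤ ψ k z u)
    -- a solution of the generalized Minty variational inequality
    (xstar : EuclideanSpace ℝ (Fin d))
    (hstar : ∀ z : EuclideanSpace ℝ (Fin d), 0 ≤ ⟪F z, z - xstar⟫ + G z - G xstar) :
    ∀ k : ℕ, 1 ≤ k →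
      ‖x k - xstar‖ ^ 2 ≤ 2 / (1 + γ * A k) * ‖x 0 - xstar‖ ^ 2 :=
  stmt13_general blk F γ L hγ hL Q hlip Qhat hQhat hL2 g hgsc G hG a A ha0 hA0 ha hA x p q hp0 hp hq
    ψ hψ hxmin xstar hstar
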